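/- arXiv:0801.3218 — 3 statements merged into one kernel-verified Lean document; each statement's English description precedes it below -/
import Mathlib

section
/- Let m, n ≥ 3 be natural numbers. Then the maximal real subfields satisfy k_m = k_n if and only if Q(ζ_m) = Q(ζ_n) or both m, n ∈ {3, 4, 6}. -/
/-- `ζ_n = e^{2πi/n}`, a primitive `n`-th root of unity in `ℂ`. -/
noncomputable def zeta (n : ℕ) : ℂ := Complex.exp (2 * Real.pi * Complex.I / n)

/-- The `n`-th cyclotomic field `ℚ(ζ_n)`, as a subfield of `ℂ`. -/
noncomputable def cyclField (n : ℕ) : IntermediateField ℚ ℂ :=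
  IntermediateField.adjoin ℚ {zeta n}

/-- The maximal real subfield `k_n = ℚ(ζ_n + ζ_n⁻¹)` of `ℚ(ζ_n)`. -/
noncomputable def realCyclField (n : ℕ) : IntermediateField ℚ ℂ :=
  IntermediateField.adjoin ℚ {zeta n + (zeta n)⁻¹}

/-!
`ζ_n` is a root of `X² - (ζ_n + ζ_n⁻¹) X + 1` over `k_n` and is not real for `n ≥ 3`, so
`[K_n : k_n] = 2` and `φ(n) = 2 [k_n : ℚ]`; in particular `k_n = ℚ` iff `φ(n) = 2` iff
`n ∈ {3, 4, 6}`, and `k_n = K_n ∩ ℝ`, which gives the easy direction.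

Conversely let `k = k_m = k_n ≠ ℚ`. Then `k ⊆ K_m ∩ K_n ⊆ K_m`, and since `[K_m : k] = 2` the
middle field is `k` or `K_m`. From `[K_m ∩ K_n : ℚ] · φ(lcm) ≤ φ(m) φ(n) = φ(gcd) φ(lcm)` one
gets `K_m ∩ K_n = K_gcd(m,n)`; a real cyclotomic field is `ℚ`, so the first case would force
`k = ℚ`. In the second case `K_m ⊆ K_n`, and both have degree `2 [k : ℚ]`.
-/

open IntermediateField Module Polynomial
open scoped Nat

namespace IntermediateField

variable {K L : Type*} [Field K] [Field L] [Algebra K L]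

theorem finrank_eq_finrank_mul_relfinrank {E F : IntermediateField K L} (h : E ≤ F) :
    finrank K F = finrank K E * relfinrank E F := by
  rw [← relfinrank_bot_left F, ← relfinrank_bot_left E, relfinrank_mul_relfinrank bot_le h]

theorem eq_or_eq_of_relfinrank_prime {E M F : IntermediateField K L}
    (hp : (relfinrank E F).Prime) (hEM : E ≤ M) (hMF : M ≤ F) : M = E ∨ M = F := by
  rw [← relfinrank_mul_relfinrank hEM hMF, Nat.prime_mul_iff] at hp
  rcases hp with ⟨-, hMF'⟩ | ⟨-, hEM'⟩
  · exact .inr (le_antisymm hMF (relfinrank_eq_one_iff.1 hMF'))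
  · exact .inl (le_antisymm (relfinrank_eq_one_iff.1 hEM') hEM)

theorem relfinrank_inf_sup_le_mul (E F : IntermediateField K L) :
    relfinrank (E ⊓ F) (E ⊔ F) ≤ relfinrank (E ⊓ F) E * relfinrank (E ⊓ F) F := by
  have hE : E ⊓ F ≤ E := inf_le_left
  have hF : E ⊓ F ≤ F := inf_le_right
  rw [relfinrank_eq_finrank_of_le (le_sup_of_le_left hE), relfinrank_eq_finrank_of_le hE,
    relfinrank_eq_finrank_of_le hF, ← extendScalars_sup hE hF]
  exact finrank_sup_le _ _

theorem finrank_inf_mul_finrank_sup_le (E F : IntermediateField K L) :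
    finrank K ↥(E ⊓ F) * finrank K ↥(E ⊔ F) ≤ finrank K E * finrank K F := by
  have hE : E ⊓ F ≤ E := inf_le_left
  have hF : E ⊓ F ≤ F := inf_le_right
  rw [finrank_eq_finrank_mul_relfinrank (le_sup_of_le_left hE),
    finrank_eq_finrank_mul_relfinrank hE, finrank_eq_finrank_mul_relfinrank hF]
  set d := finrank K ↥(E ⊓ F)
  calc d * (d * relfinrank (E ⊓ F) (E ⊔ F))
      ≤ d * (d * (relfinrank (E ⊓ F) E * relfinrank (E ⊓ F) F)) := by
        gcongr; exact relfinrank_inf_sup_le_mul E F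
    _ = _ := by ring

theorem finrank_adjoin_eq_two {x : L} {s : K} (hs : algebraMap K L s = x + x⁻¹)
    (hx : x ∉ (⊥ : IntermediateField K L)) : finrank K K⟮x⟯ = 2 := by
  have hx0 : x ≠ 0 := fun h => hx (h ▸ zero_mem _)
  have hmonic : (X ^ 2 - C s * X + 1 : K[X]).Monic := by monicity!
  have hdeg : (X ^ 2 - C s * X + 1 : K[X]).natDegree = 2 := by compute_degree!
  have hroot : aeval x (X ^ 2 - C s * X + 1 : K[X]) = 0 := by
    simp only [map_add, map_sub, map_mul, map_pow, map_one, aeval_X, aeval_C, hs]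
    field_simp
    ring
  have hint : IsIntegral K x := ⟨_, hmonic, hroot⟩
  rw [adjoin.finrank hint]
  refine le_antisymm (hdeg ▸ natDegree_le_natDegree (minpoly.min K x hmonic hroot)) ?_
  rw [minpoly.two_le_natDegree_iff hint]
  exact fun h => hx (mem_bot.2 h)

end IntermediateField

theorem Nat.totient_gcd_mul_totient_lcm (a b : ℕ) :
    φ (a.gcd b) * φ (a.lcm b) = φ a * φ b := by
  rcases (a.gcd b).eq_zero_or_pos with hg | hg
  · simp [Nat.gcd_eq_zero_iff.1 hg]
  have hdvd : a.gcd b ∣ a.lcm b := (Nat.gcd_dvd_left a b).trans (Nat.dvd_lcm_left a b)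
  have hmul : φ (a.gcd b * a.lcm b) = a.gcd b * φ (a.lcm b) := by
    have := Nat.totient_gcd_mul_totient_mul (a.gcd b) (a.lcm b)
    rw [Nat.gcd_eq_left hdvd] at this
    exact Nat.eq_of_mul_eq_mul_left (Nat.totient_pos.2 hg) (by linarith)
  have := Nat.totient_gcd_mul_totient_mul a b
  rw [← Nat.gcd_mul_lcm a b, hmul] at this
  exact Nat.eq_of_mul_eq_mul_right hg (by linarith)

theorem Nat.le_two_mul_totient_prime_pow {p k : ℕ} (hp : p.Prime) : p ^ k ≤ 2 * φ (p ^ k) := by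
  rcases k.eq_zero_or_pos with rfl | hk
  · simp
  rw [Nat.totient_prime_pow hp hk, ← pow_sub_one_mul hk.ne' p]
  have := hp.two_le
  calc p ^ (k - 1) * p ≤ p ^ (k - 1) * (2 * (p - 1)) := by gcongr; omega
    _ = _ := by ring

theorem Nat.totient_eq_two_iff {n : ℕ} : φ n = 2 ↔ n = 3 ∨ n = 4 ∨ n = 6 := by
  refine ⟨fun h => ?_, by rintro (rfl | rfl | rfl) <;> decide⟩
  have hn : n ∣ 12 := by
    refine (Nat.dvd_iff_prime_pow_dvd_dvd 12 n).2 fun p k hp hpk => ?_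
    have hle : p ^ k ≤ 4 :=
      (Nat.le_two_mul_totient_prime_pow hp).trans (by
        have := Nat.le_of_dvd two_pos (h ▸ Nat.totient_dvd_of_dvd hpk); omega)
    have hpos : 0 < p ^ k := pow_pos hp.pos k
    interval_cases p ^ k <;> decide
  have := Nat.le_of_dvd (by norm_num) hn
  interval_cases n <;> revert h <;> decide

theorem isPrimitiveRoot_zeta (n : ℕ) [NeZero n] : IsPrimitiveRoot (zeta n) n :=
  Complex.isPrimitiveRoot_exp n (NeZero.ne n)

theorem zeta_mem_cyclField (n : ℕ) : zeta n ∈ cyclField n :=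
  mem_adjoin_simple_self ℚ _

theorem mem_cyclField_of_pow_eq_one {n : ℕ} [NeZero n] {x : ℂ} (hx : x ^ n = 1) :
    x ∈ cyclField n := by
  obtain ⟨i, -, rfl⟩ := (isPrimitiveRoot_zeta n).eq_pow_of_pow_eq_one hx
  exact pow_mem (zeta_mem_cyclField n) i

theorem finrank_cyclField (n : ℕ) [NeZero n] : finrank ℚ (cyclField n) = φ n := by
  have hζ := isPrimitiveRoot_zeta n
  rw [cyclField, adjoin.finrank (hζ.isIntegral n.pos_of_neZero).tower_top,
    ← cyclotomic_eq_minpoly_rat hζ n.pos_of_neZero, natDegree_cyclotomic]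

instance finiteDimensional_cyclField (n : ℕ) [NeZero n] : FiniteDimensional ℚ (cyclField n) :=
  .of_finrank_pos (finrank_cyclField n ▸ Nat.totient_pos.2 n.pos_of_neZero)

theorem cyclField_le_of_dvd {m n : ℕ} [NeZero n] (h : m ∣ n) : cyclField m ≤ cyclField n := by
  have : NeZero m := ⟨fun hm => NeZero.ne n (Nat.eq_zero_of_zero_dvd (hm ▸ h))⟩
  obtain ⟨k, rfl⟩ := h
  rw [cyclField, adjoin_simple_le_iff]
  exact mem_cyclField_of_pow_eq_one
    (by rw [pow_mul, (isPrimitiveRoot_zeta m).pow_eq_one, one_pow])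

theorem cyclField_sup (m n : ℕ) [NeZero m] [NeZero n] :
    cyclField m ⊔ cyclField n = cyclField (m.lcm n) := by
  have : NeZero (m.lcm n) := ⟨Nat.lcm_ne_zero (NeZero.ne m) (NeZero.ne n)⟩
  refine le_antisymm (sup_le (cyclField_le_of_dvd (Nat.dvd_lcm_left m n))
    (cyclField_le_of_dvd (Nat.dvd_lcm_right m n))) ?_
  have hξ := (isPrimitiveRoot_zeta m).pow_mul_pow_lcm (isPrimitiveRoot_zeta n)
    (NeZero.ne m) (NeZero.ne n)
  obtain ⟨i, -, hi⟩ := hξ.eq_pow_of_pow_eq_one (isPrimitiveRoot_zeta (m.lcm n)).pow_eq_one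
  rw [cyclField, adjoin_simple_le_iff, ← hi]
  refine pow_mem (mul_mem (pow_mem ?_ _) (pow_mem ?_ _)) i
  · exact le_sup_left (b := cyclField n) (zeta_mem_cyclField m)
  · exact le_sup_right (a := cyclField m) (zeta_mem_cyclField n)

theorem cyclField_inf (m n : ℕ) [NeZero m] [NeZero n] :
    cyclField m ⊓ cyclField n = cyclField (m.gcd n) := by
  have : NeZero (m.gcd n) := ⟨Nat.gcd_ne_zero_left (NeZero.ne m)⟩
  have : NeZero (m.lcm n) := ⟨Nat.lcm_ne_zero (NeZero.ne m) (NeZero.ne n)⟩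
  have hle : cyclField (m.gcd n) ≤ cyclField m ⊓ cyclField n :=
    le_inf (cyclField_le_of_dvd (Nat.gcd_dvd_left m n))
      (cyclField_le_of_dvd (Nat.gcd_dvd_right m n))
  have : FiniteDimensional ℚ ↥(cyclField m ⊓ cyclField n) :=
    .of_injective (inclusion inf_le_left).toLinearMap (inclusion_injective inf_le_left)
  refine (eq_of_le_of_finrank_le hle ?_).symm
  have := finrank_inf_mul_finrank_sup_le (cyclField m) (cyclField n)
  rw [cyclField_sup, finrank_cyclField, finrank_cyclField, finrank_cyclField,
    ← Nat.totient_gcd_mul_totient_lcm] at this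
  rw [finrank_cyclField]
  exact Nat.le_of_mul_le_mul_right this (Nat.totient_pos.2 (Nat.pos_of_neZero _))

noncomputable def realSubfield : IntermediateField ℚ ℂ :=
  (Complex.ofRealAm.restrictScalars ℚ).fieldRange

theorem mem_realSubfield {z : ℂ} : z ∈ realSubfield ↔ z.im = 0 :=
  ⟨fun ⟨r, hr⟩ => hr ▸ Complex.ofReal_im r, fun h => ⟨z.re, Complex.ext rfl h.symm⟩⟩

theorem zeta_eq_exp (n : ℕ) : zeta n = Complex.exp ((2 * Real.pi / n : ℝ) * Complex.I) := by
  rw [zeta]; push_cast; ring_nf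

theorem zeta_add_inv_zeta (n : ℕ) : zeta n + (zeta n)⁻¹ = 2 * Real.cos (2 * Real.pi / n) := by
  rw [zeta_eq_exp, ← Complex.exp_neg, Complex.ofReal_cos, Complex.two_cos, neg_mul]

theorem zeta_im (n : ℕ) : (zeta n).im = Real.sin (2 * Real.pi / n) := by
  rw [zeta_eq_exp, Complex.exp_ofReal_mul_I_im]

theorem zeta_notMem_realSubfield {n : ℕ} (hn : 3 ≤ n) : zeta n ∉ realSubfield := by
  rw [mem_realSubfield, zeta_im]
  have hn' : (3 : ℝ) ≤ n := by exact_mod_cast hn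
  refine (Real.sin_pos_of_pos_of_lt_pi (by positivity) ?_).ne'
  rw [div_lt_iff₀ (by positivity)]
  nlinarith [Real.pi_pos]

theorem realCyclField_le_realSubfield (n : ℕ) : realCyclField n ≤ realSubfield := by
  rw [realCyclField, adjoin_simple_le_iff, zeta_add_inv_zeta, mem_realSubfield]
  norm_cast

theorem realCyclField_le_cyclField (n : ℕ) : realCyclField n ≤ cyclField n := by
  rw [realCyclField, adjoin_simple_le_iff]
  exact add_mem (zeta_mem_cyclField n) (inv_mem (zeta_mem_cyclField n))

theorem relfinrank_realCyclField_cyclField {n : ℕ} (hn : 3 ≤ n) :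
    relfinrank (realCyclField n) (cyclField n) = 2 := by
  have hle := realCyclField_le_cyclField n
  rw [relfinrank_eq_finrank_of_le hle,
    show extendScalars hle = (realCyclField n)⟮zeta n⟯ from extendScalars_adjoin hle]
  refine finrank_adjoin_eq_two (s := ⟨_, mem_adjoin_simple_self ℚ _⟩) rfl fun h => ?_
  obtain ⟨⟨y, hy⟩, rfl⟩ := mem_bot.1 h
  exact zeta_notMem_realSubfield hn (realCyclField_le_realSubfield n hy)

theorem totient_eq_finrank_realCyclField_mul_two {n : ℕ} (hn : 3 ≤ n) :
    φ n = finrank ℚ (realCyclField n) * 2 := by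
  have : NeZero n := ⟨by omega⟩
  rw [← finrank_cyclField, finrank_eq_finrank_mul_relfinrank (realCyclField_le_cyclField n),
    relfinrank_realCyclField_cyclField hn]

theorem realCyclField_eq_bot_iff {n : ℕ} (hn : 3 ≤ n) :
    realCyclField n = ⊥ ↔ n ∈ ({3, 4, 6} : Set ℕ) := by
  rw [← IntermediateField.finrank_eq_one_iff, Set.mem_insert_iff, Set.mem_insert_iff,
    Set.mem_singleton_iff, ← Nat.totient_eq_two_iff, totient_eq_finrank_realCyclField_mul_two hn]
  omega

theorem lt_three_of_cyclField_le_realSubfield {n : ℕ} (h : cyclField n ≤ realSubfield) :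
    n < 3 := by
  by_contra! hn
  exact zeta_notMem_realSubfield hn (h (zeta_mem_cyclField n))

theorem realCyclField_eq_inf_realSubfield {n : ℕ} (hn : 3 ≤ n) :
    realCyclField n = cyclField n ⊓ realSubfield := by
  have hprime : (relfinrank (realCyclField n) (cyclField n)).Prime :=
    relfinrank_realCyclField_cyclField hn ▸ Nat.prime_two
  have hle := le_inf (realCyclField_le_cyclField n) (realCyclField_le_realSubfield n)
  refine ((eq_or_eq_of_relfinrank_prime hprime hle inf_le_left).resolve_right fun h => ?_).symm
  exact (lt_three_of_cyclField_le_realSubfield (inf_eq_left.1 h)).not_ge hn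

theorem cyclField_eq_bot_of_le_realSubfield {n : ℕ} [NeZero n] (h : cyclField n ≤ realSubfield) :
    cyclField n = ⊥ := by
  have := lt_three_of_cyclField_le_realSubfield h
  rw [← IntermediateField.finrank_eq_one_iff, finrank_cyclField, Nat.totient_eq_one_iff]
  have := NeZero.ne n
  omega

theorem cyclField_eq_of_realCyclField_eq {m n : ℕ} (hm : 3 ≤ m) (hn : 3 ≤ n)
    (h : realCyclField m = realCyclField n) (hbot : realCyclField m ≠ ⊥) :
    cyclField m = cyclField n := by
  have : NeZero m := ⟨by omega⟩
  have : NeZero n := ⟨by omega⟩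
  have : NeZero (m.gcd n) := ⟨Nat.gcd_ne_zero_left (NeZero.ne m)⟩
  have hprime : (relfinrank (realCyclField m) (cyclField m)).Prime :=
    relfinrank_realCyclField_cyclField hm ▸ Nat.prime_two
  have hle : realCyclField m ≤ cyclField m ⊓ cyclField n :=
    le_inf (realCyclField_le_cyclField m) (h ▸ realCyclField_le_cyclField n)
  rcases eq_or_eq_of_relfinrank_prime hprime hle inf_le_left with hk | hK
  · rw [cyclField_inf] at hk
    refine absurd ?_ hbot
    rw [← hk]
    exact cyclField_eq_bot_of_le_realSubfield (hk ▸ realCyclField_le_realSubfield m)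
  · refine eq_of_le_of_finrank_eq (inf_eq_left.1 hK) ?_
    rw [finrank_cyclField, finrank_cyclField, totient_eq_finrank_realCyclField_mul_two hm,
      totient_eq_finrank_realCyclField_mul_two hn, h]

/-- For `m, n ≥ 3`: `k_m = k_n` iff `ℚ(ζ_m) = ℚ(ζ_n)` or `m, n ∈ {3,4,6}`. -/
theorem realCyclField_eq_iff (m n : ℕ) (hm : 3 ≤ m) (hn : 3 ≤ n) :
    realCyclField m = realCyclField n ↔
      (cyclField m = cyclField n ∨
        (m ∈ ({3, 4, 6} : Set ℕ) ∧ n ∈ ({3, 4, 6} : Set ℕ))) := by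
  constructor
  · intro h
    by_cases hbot : realCyclField m = ⊥
    · exact .inr ⟨(realCyclField_eq_bot_iff hm).1 hbot,
        (realCyclField_eq_bot_iff hn).1 (h ▸ hbot)⟩
    · exact .inl (cyclField_eq_of_realCyclField_eq hm hn h hbot)
  · rintro (h | ⟨hm', hn'⟩)
    · rw [realCyclField_eq_inf_realSubfield hm, realCyclField_eq_inf_realSubfield hn, h]
    · rw [(realCyclField_eq_bot_iff hm).2 hm', (realCyclField_eq_bot_iff hn).2 hn']
end

section
/- For a natural number n with n ≢ 2 (mod 4), φ(n)/2 is a prime number if and only if n ∈ {8, 9, 12} or n = 2p + 1 for some Sophie Germain prime p (a prime p such that 2p + 1 is also prime). -/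
/-!
For `n > 2` the totient is even, so the claim is about `φ n = 2 * q` with `q` prime.
If `4 ∣ n` then `φ n = 2 * φ (n / 2)`, and the prime `φ (n / 2)` must be the even prime `2`,
which forces `n / 2 ∈ {4, 6}`. If `n` is odd, peel off a prime factor `p`, `n = p * m`:
when `p ∣ m`, `p ∣ 2 * q` gives `p = q` and `φ m = 2`, so `n = 9`; when `p ∤ m` and `m > 1`,
`φ n = (p - 1) * φ m` is a product of two even numbers, impossible unless both are `2`, which
would force `p = m = 3`; so `m = 1` and `n = p = 2 * q + 1`.
-/

namespace Nat

theorem eq_two_of_even_of_mul_eq_two_mul_prime {a b q : ℕ} (hq : q.Prime) (ha : Even a)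
    (hb : Even b) (h : a * b = 2 * q) : a = 2 ∧ b = 2 := by
  obtain ⟨x, rfl⟩ := ha
  obtain ⟨y, rfl⟩ := hb
  have hq_eq : q = 2 * (x * y) := by linarith [show (x + x) * (y + y) = 4 * (x * y) by ring]
  have hq2 : q = 2 := ((hq.eq_one_or_self_of_dvd 2 ⟨x * y, hq_eq⟩).resolve_left (by omega)).symm
  have hxy : x * y = 1 := by omega
  rw [_root_.mul_eq_one] at hxy
  omega

theorem totient_eq_two_of_prime {n : ℕ} (h : (φ n).Prime) : φ n = 2 := by
  refine h.even_iff.1 (totient_even ?_)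
  by_contra! hn
  interval_cases n <;> simp_all [not_prime_zero, not_prime_one]

theorem eq_three_of_odd_of_totient_eq_two {n : ℕ} (hn : Odd n) (h : φ n = 2) : n = 3 := by
  have hn1 : n ≠ 1 := by rintro rfl; simp at h
  obtain ⟨p, hp, hpn⟩ := exists_prime_and_dvd hn1
  have hp3 : p = 3 := by
    have hp_sub : p - 1 ∣ 2 := h ▸ totient_prime hp ▸ totient_dvd_of_dvd hpn
    have hp2 : p ≠ 2 := by
      rintro rfl
      exact not_even_iff_odd.2 hn (even_iff_two_dvd.2 hpn)
    have := le_of_dvd two_pos hp_sub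
    have := hp.two_le
    omega
  subst hp3
  obtain ⟨m, rfl⟩ := hpn
  by_cases h3 : 3 ∣ m
  · rw [totient_mul_of_prime_of_dvd prime_three h3] at h
    omega
  · rw [totient_mul_of_prime_of_not_dvd prime_three h3] at h
    rcases (totient_eq_one_iff (n := m)).1 (by omega) with rfl | rfl
    · rfl
    · exact absurd hn (by decide)

theorem totient_eq_two_iff_s10 {n : ℕ} : φ n = 2 ↔ n = 3 ∨ n = 4 ∨ n = 6 := by
  refine ⟨fun h => ?_, by rintro (rfl | rfl | rfl) <;> decide⟩
  rcases n.even_or_odd with ⟨m, rfl⟩ | hn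
  · rw [← two_mul] at h ⊢
    rcases m.even_or_odd with hm | hm
    · rw [totient_two_mul_of_even hm] at h
      rcases (totient_eq_one_iff (n := m)).1 (by omega) with rfl | rfl
      · exact absurd hm (by decide)
      · simp
    · rw [totient_two_mul_of_odd hm] at h
      simp [eq_three_of_odd_of_totient_eq_two hm h]
  · exact Or.inl (eq_three_of_odd_of_totient_eq_two hn h)

theorem eq_eight_or_twelve_of_totient_eq_two_mul_prime {n q : ℕ} (hq : q.Prime) (hn : 4 ∣ n)
    (h : φ n = 2 * q) : n = 8 ∨ n = 12 := by
  obtain ⟨k, rfl⟩ := hn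
  rw [show 4 * k = 2 * (2 * k) by ring, totient_two_mul_of_even (even_two_mul k)] at h
  have hk : φ (2 * k) = q := by omega
  rcases totient_eq_two_iff_s10.1 (totient_eq_two_of_prime (hk ▸ hq)) with hk | hk | hk <;> omega

theorem eq_nine_or_two_mul_add_one_of_totient_eq_two_mul_prime {n q : ℕ} (hq : q.Prime)
    (hn : Odd n) (h : φ n = 2 * q) : n = 9 ∨ n = 2 * q + 1 := by
  have hn1 : n ≠ 1 := by
    rintro rfl
    have := hq.two_le
    simp at h
    omega
  obtain ⟨p, hp, m, rfl⟩ := exists_prime_and_dvd hn1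
  have hp2 : p ≠ 2 := by
    rintro rfl
    exact not_even_iff_odd.2 hn (even_two_mul m)
  have hm : Odd m := (odd_mul.1 hn).2
  by_cases hpm : p ∣ m
  · rw [totient_mul_of_prime_of_dvd hp hpm] at h
    have hpq : p = q := (prime_dvd_prime_iff_eq hp hq).1
      (((coprime_primes hp prime_two).2 hp2).dvd_of_dvd_mul_left ⟨_, h.symm⟩)
    subst hpq
    have hm3 : m = 3 := eq_three_of_odd_of_totient_eq_two hm
      (Nat.eq_of_mul_eq_mul_left hp.pos (by rw [h, mul_comm]))
    subst hm3
    rw [(prime_dvd_prime_iff_eq hp prime_three).1 hpm]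
    simp
  · rw [totient_mul_of_prime_of_not_dvd hp hpm] at h
    by_cases hm1 : m = 1
    · subst hm1
      have := hp.two_le
      simp at h
      omega
    · have hm2 : 2 < m := by obtain ⟨j, rfl⟩ := hm; omega
      obtain ⟨hp3, hφm⟩ := eq_two_of_even_of_mul_eq_two_mul_prime hq
        (Nat.Odd.sub_odd (hp.odd_of_ne_two hp2) odd_one) (totient_even hm2) h
      obtain rfl : p = 3 := by omega
      exact absurd (eq_three_of_odd_of_totient_eq_two hm hφm ▸ dvd_rfl) hpm

end Nat

/-- For a natural number `n ≢ 2 (mod 4)`: `φ(n)/2` is prime iff `n ∈ {8, 9, 12}` or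
`n = 2p + 1` for a Sophie Germain prime `p` (a prime `p` with `2p + 1` prime). -/
theorem totient_div_two_prime_iff (n : ℕ) (hn4 : n % 4 ≠ 2) :
    Nat.Prime (Nat.totient n / 2) ↔
      (n = 8 ∨ n = 9 ∨ n = 12 ∨
        ∃ p : ℕ, Nat.Prime p ∧ Nat.Prime (2 * p + 1) ∧ n = 2 * p + 1) := by
  constructor
  · intro hq
    have hn2 : 2 < n := by
      by_contra! hn
      interval_cases n <;> simp_all [Nat.not_prime_zero]
    have hφ : n.totient = 2 * (n.totient / 2) :=
      (Nat.two_mul_div_two_of_even (Nat.totient_even hn2)).symm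
    rcases n.even_or_odd with hn | hn
    · have h4 : 4 ∣ n := by obtain ⟨m, rfl⟩ := hn; omega
      rcases Nat.eq_eight_or_twelve_of_totient_eq_two_mul_prime hq h4 hφ with rfl | rfl <;> simp
    · rcases Nat.eq_nine_or_two_mul_add_one_of_totient_eq_two_mul_prime hq hn hφ with rfl | hn
      · simp
      · have hn_prime : n.Prime := (Nat.totient_eq_iff_prime (by omega)).1 (by omega)
        exact Or.inr (Or.inr (Or.inr ⟨_, hq, hn ▸ hn_prime, hn⟩))
  · rintro (rfl | rfl | rfl | ⟨p, hp, hp2, rfl⟩)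
    · decide
    · decide
    · decide
    · rwa [Nat.totient_prime hp2, show (2 * p + 1 - 1) / 2 = p by omega]
end

section
/- Let U be a finite set of directions in S¹ with at least 2 elements, let Λ ⊆ ℝ² be a Delone set, and suppose P is a U-polygon in Λ (a non-degenerate convex polygon with vertices in Λ such that every line through a vertex in a direction from U meets another vertex). Partition the vertex set of P into the two alternating sets V and V′ around the boundary. Then card(V) = card(V′), and the sets F = C ∪ V and F′ = C ∪ V′, where C = (Λ ∩ P) \ (V ∪ V′), are distinct finite subsets of Λ with X_u F = X_u F′ for every u ∈ U. -/
/-!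
Fix the orientation sign `s` of the polygon. Seen from a vertex `v a`, the other vertices
`v (a + 1), v (a + 2), …` turn monotonically, so `s * cross (v b - v a) (v c - v a) > 0` whenever
`b` comes before `c` in the cyclic order starting at `a`; in particular no three vertices are
collinear. Hence, for `u ∈ U`, the other vertex on the `u`-line through a vertex is unique, which
gives a fixed-point-free involution `π` of the vertices preserving every `u`-line. The line through
`v i` and `v (π i)` has the open arc from `i` to `π i` strictly on one side and the rest on the
other, so that arc is `π`-invariant and has an even number of vertices: `π i - i` is odd. As `π`
has no fixed points, the number of vertices is even too, so `π` swaps the two alternating classes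
on every `u`-line. Finiteness of `C` comes from the uniform discreteness of `Λ`.
-/

open Function

lemma Finset.even_card_of_involutive {α : Type*} {s : Finset α} {π : α → α}
    (hπ : Involutive π) (hne : ∀ a, π a ≠ a) (hmem : ∀ a ∈ s, π a ∈ s) : Even s.card := by
  have h : ∑ _ ∈ s, (1 : ZMod 2) = 0 :=
    Finset.sum_involution (fun a _ => π a) (fun _ _ => by decide) (fun a _ _ => hne a) hmem
      (fun a _ => hπ a)
  simpa [← ZMod.natCast_eq_zero_iff_even] using h

lemma Set.ncard_eq_of_involutive {α : Type*} {A B : Set α} {π : α → α} (hπ : Involutive π)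
    (hAB : MapsTo π A B) (hBA : MapsTo π B A) : A.ncard = B.ncard := by
  have hB : π '' A = B := hAB.image_subset.antisymm fun b hb => ⟨π b, hBA hb, hπ b⟩
  rw [← hB, ncard_image_of_injective A hπ.injective]

lemma Set.ncard_union_inter_eq {α : Type*} {C A B L : Set α} (hC : C.Finite) (hA : A.Finite)
    (hB : B.Finite) (hCA : Disjoint C A) (hCB : Disjoint C B)
    (h : (A ∩ L).ncard = (B ∩ L).ncard) : ((C ∪ A) ∩ L).ncard = ((C ∪ B) ∩ L).ncard := by
  rw [union_inter_distrib_right, union_inter_distrib_right,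
    ncard_union_eq (hCA.mono inter_subset_left inter_subset_left) (hC.inter_of_left L)
      (hA.inter_of_left L),
    ncard_union_eq (hCB.mono inter_subset_left inter_subset_left) (hC.inter_of_left L)
      (hB.inter_of_left L), h]

lemma mul_pos_of_mul_pos_of_mul_pos {x y z : ℝ} (hxy : 0 < x * y) (hyz : 0 < y * z) :
    0 < x * z :=
  pos_of_mul_pos_left ((mul_pos hxy hyz).trans_eq (by ring)) (mul_self_nonneg y)

lemma Set.union_ne_union_of_mem_sdiff {α : Type*} {C A B : Set α} {a : α}
    (hCA : Disjoint C A) (ha : a ∈ A \ B) : C ∪ A ≠ C ∪ B := fun h => by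
  have haCB : a ∈ C ∪ B := h ▸ Or.inr ha.1
  exact haCB.elim (fun haC => hCA.ne_of_mem haC ha.1 rfl) ha.2

lemma IsCompact.finite_inter_of_subsingleton_inter_ball {X : Type*} [PseudoMetricSpace X]
    {Λ K : Set X} (hK : IsCompact K) {r : ℝ} (hr : 0 < r)
    (hdisc : ∀ x, (Λ ∩ Metric.ball x r).Subsingleton) : (Λ ∩ K).Finite := by
  obtain ⟨t, ht, hcover⟩ := Metric.totallyBounded_iff.mp hK.totallyBounded r hr
  refine (ht.biUnion fun y _ => (hdisc y).finite).subset fun z ⟨hzΛ, hzK⟩ => ?_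
  obtain ⟨y, hy, hzy⟩ := Set.mem_iUnion₂.mp (hcover hzK)
  exact Set.mem_iUnion₂.mpr ⟨y, hy, hzΛ, hzy⟩

namespace Complex

def cross (a b : ℂ) : ℝ := a.re * b.im - a.im * b.re

lemma cross_self (a : ℂ) : cross a a = 0 := by
  rw [cross]; ring

lemma cross_comm (a b : ℂ) : cross b a = -cross a b := by
  rw [cross, cross]; ring

lemma cross_add_ofReal_mul_self (u z : ℂ) (t : ℝ) : cross u (z + t * u) = cross u z := by
  simp only [cross, add_re, add_im, mul_re, mul_im, ofReal_re, ofReal_im]; ring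

lemma cross_ofReal_mul_left (t : ℝ) (u z : ℂ) : cross (t * u) z = t * cross u z := by
  simp only [cross, mul_re, mul_im, ofReal_re, ofReal_im]; ring

lemma cross_sub_right (a x y : ℂ) : cross a (x - y) = cross a x - cross a y := by
  simp only [cross, sub_re, sub_im]; ring

lemma cross_mul_cross_eq (e w₁ w₂ w₃ : ℂ) :
    cross w₁ w₃ * cross e w₂ = cross w₁ w₂ * cross e w₃ + cross w₂ w₃ * cross e w₁ := by
  simp only [cross]; ring

lemma cross_pos_trans {s : ℝ} {e w₁ w₂ w₃ : ℂ} (h₁ : 0 ≤ s * cross e w₁)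
    (h₂ : 0 < s * cross e w₂) (h₃ : 0 < s * cross e w₃) (h₁₂ : 0 < s * cross w₁ w₂)
    (h₂₃ : 0 < s * cross w₂ w₃) : 0 < s * cross w₁ w₃ := by
  have key : (s * cross w₁ w₃) * (s * cross e w₂) =
      (s * cross w₁ w₂) * (s * cross e w₃) + (s * cross w₂ w₃) * (s * cross e w₁) := by
    linear_combination s ^ 2 * cross_mul_cross_eq e w₁ w₂ w₃
  refine pos_of_mul_pos_left ?_ h₂.le
  rw [key]; positivity

lemma _root_.LinearMap.apply_eq_re_mul_add_im_mul (f : ℂ →ₗ[ℝ] ℝ) (z : ℂ) :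
    f z = z.re * f 1 + z.im * f I := by
  have hz : z = z.re • (1 : ℂ) + z.im • I := by simp
  conv_lhs => rw [hz]
  rw [map_add, map_smul, map_smul, smul_eq_mul, smul_eq_mul]

lemma _root_.LinearMap.apply_mul_normSq {f : ℂ →ₗ[ℝ] ℝ} {e : ℂ} (he : f e = 0) (z : ℂ) :
    f z * normSq e = cross e z * f (I * e) := by
  rw [LinearMap.apply_eq_re_mul_add_im_mul f z, LinearMap.apply_eq_re_mul_add_im_mul f (I * e)]
  rw [LinearMap.apply_eq_re_mul_add_im_mul f e] at he
  simp only [normSq_apply, cross, mul_re, mul_im, I_re, I_im]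
  linear_combination (z.re * e.re + z.im * e.im) * he

end Complex

open Complex

section Polygon

open Fin.NatCast Fin.CommRing

variable {n : ℕ} [NeZero n]

lemma Fin.add_natCast_inj {a : Fin n} {m m' : ℕ} (hm : m < n) (hm' : m' < n) :
    a + (m : Fin n) = a + m' ↔ m = m' := by
  rw [add_right_inj, Fin.ext_iff, Fin.val_cast_of_lt hm, Fin.val_cast_of_lt hm']

lemma Fin.add_natCast_ne_self {a : Fin n} {m : ℕ} (h0 : 0 < m) (hm : m < n) :
    a + (m : Fin n) ≠ a := by
  simpa using (Fin.add_natCast_inj (a := a) hm (Nat.pos_of_neZero n)).not.mpr h0.ne'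

def IsStrictlyConvexPolygon (v : Fin n → ℂ) : Prop :=
  ∀ i : Fin n, ∃ (f : ℂ →ₗ[ℝ] ℝ) (c : ℝ),
    f (v i) = c ∧ f (v (i + 1)) = c ∧ ∀ j : Fin n, j ≠ i → j ≠ i + 1 → f (v j) < c

def EdgesOrientedBy (s : ℝ) (v : Fin n → ℂ) : Prop :=
  ∀ k j : Fin n, j ≠ k → j ≠ k + 1 → 0 < s * cross (v (k + 1) - v k) (v j - v k)

variable {v : Fin n → ℂ}

lemma Fin.add_one_ne_self (hn : 3 ≤ n) (k : Fin n) : k + 1 ≠ k := by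
  simpa using Fin.add_natCast_ne_self (a := k) (m := 1) Nat.one_pos (by omega)

lemma Fin.add_one_add_one_ne_self (hn : 3 ≤ n) (k : Fin n) : k + 1 + 1 ≠ k := by
  simpa [add_assoc, one_add_one_eq_two] using
    Fin.add_natCast_ne_self (a := k) (m := 2) Nat.two_pos (by omega)

namespace IsStrictlyConvexPolygon

lemma apply_add_one_ne (hv : IsStrictlyConvexPolygon v) (hn : 3 ≤ n) (k : Fin n) :
    v (k + 1) ≠ v k := by
  obtain ⟨f, c, hk, -, hlt⟩ := hv (k + 1)
  have h := hlt k (Fin.add_one_ne_self hn k).symm (Fin.add_one_add_one_ne_self hn k).symm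
  exact fun heq => h.ne (heq ▸ hk)

lemma injective (hv : IsStrictlyConvexPolygon v) (hn : 3 ≤ n) : Injective v := by
  intro a b hab
  by_contra hne
  obtain ⟨f, c, ha, -, hlt⟩ := hv a
  by_cases hb : b = a + 1
  · exact hv.apply_add_one_ne hn a (hb ▸ hab.symm)
  · exact (hlt b (Ne.symm hne) hb).ne (hab ▸ ha)

lemma exists_edge_sign (hv : IsStrictlyConvexPolygon v) (hn : 3 ≤ n) (k : Fin n) :
    ∃ σ : ℝ, ∀ j, j ≠ k → j ≠ k + 1 → 0 < σ * cross (v (k + 1) - v k) (v j - v k) := by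
  obtain ⟨f, c, hk, hk1, hlt⟩ := hv k
  have he : 0 < normSq (v (k + 1) - v k) :=
    normSq_pos.mpr (sub_ne_zero.mpr (hv.apply_add_one_ne hn k))
  refine ⟨-f (I * (v (k + 1) - v k)), fun j hj hj1 => ?_⟩
  have hf := LinearMap.apply_mul_normSq (f := f) (e := v (k + 1) - v k)
    (by rw [map_sub, hk, hk1, sub_self]) (v j - v k)
  have hneg : f (v j - v k) < 0 := by rw [map_sub, hk]; linarith [hlt j hj hj1]
  linarith [mul_neg_of_neg_of_pos hneg he]

lemma exists_edgesOrientedBy (hv : IsStrictlyConvexPolygon v) (hn : 3 ≤ n) :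
    ∃ s, EdgesOrientedBy s v := by
  choose σ hσ using hv.exists_edge_sign hn
  -- both signs are the orientation of the triangle `v k, v (k + 1), v (k + 1 + 1)`
  have hstep : ∀ k, 0 < σ k * σ (k + 1) := by
    intro k
    have h₁ := hσ k (k + 1 + 1) (Fin.add_one_add_one_ne_self hn k) (Fin.add_one_ne_self hn _)
    have h₂ := hσ (k + 1) k (Fin.add_one_ne_self hn k).symm
      (Fin.add_one_add_one_ne_self hn k).symm
    have hrot : cross (v (k + 1 + 1) - v (k + 1)) (v k - v (k + 1)) =
        cross (v (k + 1) - v k) (v (k + 1 + 1) - v k) := by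
      simp only [cross, sub_re, sub_im]; ring
    rw [hrot, mul_comm] at h₂
    exact mul_pos_of_mul_pos_of_mul_pos h₁ h₂
  have hσ0 : ∀ m : ℕ, 0 < σ 0 * σ m := by
    intro m
    induction m with
    | zero => simpa using mul_self_pos.mpr (left_ne_zero_of_mul (hstep 0).ne')
    | succ m ih => simpa using mul_pos_of_mul_pos_of_mul_pos ih (hstep m)
  refine ⟨σ 0, fun k j hj hj1 => mul_pos_of_mul_pos_of_mul_pos ?_ (hσ k j hj hj1)⟩
  simpa using hσ0 k.val

end IsStrictlyConvexPolygon

namespace EdgesOrientedBy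

variable {s : ℝ}

lemma cross_pos_of_natCast (hs : EdgesOrientedBy s v) (a : Fin n) {m m' : ℕ} (hm : 0 < m)
    (hmm' : m < m') (hm' : m' < n) :
    0 < s * cross (v (a + m) - v a) (v (a + m') - v a) := by
  have hbase : ∀ k : ℕ, 0 < k → k + 1 < n →
      0 < s * cross (v (a + k) - v a) (v (a + (k + 1 : ℕ)) - v a) := by
    intro k hk hkn
    have h := hs (a + k) a (Fin.add_natCast_ne_self hk (by omega)).symm
      (by simpa [add_assoc] using (Fin.add_natCast_ne_self (a := a) (Nat.succ_pos k) hkn).symm)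
    rw [Nat.cast_succ, ← add_assoc]
    convert h using 1
    simp only [cross, sub_re, sub_im]; ring
  have hhalf : ∀ k : ℕ, 2 ≤ k → k < n →
      0 < s * cross (v (a + 1) - v a) (v (a + k) - v a) := by
    intro k hk hkn
    refine hs a (a + k) (Fin.add_natCast_ne_self (by omega) hkn) ?_
    simpa using (Fin.add_natCast_inj (a := a) hkn (by omega : 1 < n)).not.mpr (by omega)
  induction m', hmm' using Nat.le_induction with
  | base => exact hbase m hm hm'
  | succ m' hmm' ih =>
    refine cross_pos_trans (e := v (a + 1) - v a) ?_ (hhalf m' (by omega) (by omega))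
      (hhalf (m' + 1) (by omega) hm') (ih (by omega)) (hbase m' (by omega) hm')
    rcases Nat.lt_or_ge 1 m with h1 | h1
    · exact (hhalf m h1 (by omega)).le
    · obtain rfl : m = 1 := by omega
      simp [cross_self]

lemma cross_pos (hs : EdgesOrientedBy s v) {a b c : Fin n} (hab : 0 < b - a)
    (hbc : b - a < c - a) : 0 < s * cross (v b - v a) (v c - v a) := by
  simpa using hs.cross_pos_of_natCast a hab hbc (c - a).isLt

lemma cross_ne_zero (hs : EdgesOrientedBy s v) {a b c : Fin n} (hab : a ≠ b) (hac : a ≠ c)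
    (hbc : b ≠ c) : cross (v b - v a) (v c - v a) ≠ 0 := by
  have hb : 0 < b - a := Fin.pos_iff_ne_zero.mpr (sub_ne_zero.mpr hab.symm)
  have hc : 0 < c - a := Fin.pos_iff_ne_zero.mpr (sub_ne_zero.mpr hac.symm)
  rcases lt_or_gt_of_ne (sub_left_injective.ne hbc : b - a ≠ c - a) with h | h
  · exact right_ne_zero_of_mul (hs.cross_pos hb h).ne'
  · rw [cross_comm, neg_ne_zero]
    exact right_ne_zero_of_mul (hs.cross_pos hc h).ne'

lemma exists_involutive (hs : EdgesOrientedBy s v) {u : ℂ}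
    (hpair : ∀ i, ∃ j ≠ i, ∃ t : ℝ, v j = v i + t * u) :
    ∃ π : Fin n → Fin n, Involutive π ∧ (∀ k, π k ≠ k) ∧
      ∀ k, ∃ t : ℝ, v (π k) = v k + t * u := by
  choose π hne t ht using hpair
  refine ⟨π, fun k => ?_, hne, fun k => ⟨t k, ht k⟩⟩
  by_contra h
  refine hs.cross_ne_zero (hne k).symm (Ne.symm h) (hne (π k)).symm ?_
  rw [ht (π k), ht k]
  simp only [cross, sub_re, sub_im, add_re, add_im, mul_re, mul_im, ofReal_re, ofReal_im]
  ring

lemma odd_val_sub (hs : EdgesOrientedBy s v) {u : ℂ} {π : Fin n → Fin n}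
    (hπ : Involutive π) (hne : ∀ k, π k ≠ k)
    (hline : ∀ k, ∃ t : ℝ, v (π k) = v k + t * u) (i : Fin n) : Odd (π i - i).val := by
  obtain ⟨t, ht⟩ := hline i
  have hlevel : ∀ k, cross u (v (π k)) = cross u (v k) := fun k => by
    obtain ⟨t', ht'⟩ := hline k
    rw [ht', cross_add_ofReal_mul_self]
  have hcross : ∀ k, cross (v (π i) - v i) (v k - v i) = t * (cross u (v k) - cross u (v i)) :=
    fun k => by rw [ht, add_sub_cancel_left, cross_ofReal_mul_left, cross_sub_right]
  set arc := (Finset.Ioo 0 (π i - i)).image (i + ·)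
  have hmem : ∀ k, k ∈ arc ↔ 0 < k - i ∧ k - i < π i - i := fun k => by
    simp only [arc, Finset.mem_image, Finset.mem_Ioo]
    exact ⟨by rintro ⟨x, hx, rfl⟩; simpa using hx, fun hk => ⟨k - i, hk, by ring⟩⟩
  have harc : ∀ k, k ∈ arc ↔ s * t * (cross u (v k) - cross u (v i)) < 0 := by
    intro k
    rw [hmem, mul_assoc, ← hcross]
    by_cases hki : k = i
    · simp [hki, cross]
    by_cases hkπ : k = π i
    · simp [hkπ, cross_self]
    have hk : 0 < k - i := Fin.pos_iff_ne_zero.mpr (sub_ne_zero.mpr hki)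
    rcases lt_or_gt_of_ne (sub_left_injective.ne hkπ : k - i ≠ π i - i) with h | h
    · have := hs.cross_pos hk h
      rw [cross_comm] at this
      simp only [hk, h, true_and, true_iff]
      linarith
    · have := hs.cross_pos (Fin.pos_iff_ne_zero.mpr (sub_ne_zero.mpr (hne i))) h
      simp only [hk, true_and, not_lt.mpr h.le, false_iff, not_lt]
      exact this.le
  have heven : Even arc.card :=
    Finset.even_card_of_involutive hπ hne fun k hk => by rwa [harc, hlevel, ← harc]
  rw [Finset.card_image_of_injective _ (add_right_injective i), Fin.card_Ioo, Fin.val_zero]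
    at heven
  have hpos : (π i - i).val ≠ 0 := Fin.val_ne_zero_iff.mpr (sub_ne_zero.mpr (hne i))
  obtain ⟨x, hx⟩ := heven
  exact ⟨x, by omega⟩

end EdgesOrientedBy

lemma Fin.val_mod_two_ne_of_odd_val_sub (heven : Even n) {a b : Fin n} (h : Odd (b - a).val) :
    b.val % 2 ≠ a.val % 2 := by
  have hb : b.val = (a.val + (b - a).val) % n := by rw [← Fin.val_add, add_sub_cancel]
  obtain ⟨x, hx⟩ := h
  obtain ⟨y, hy⟩ := heven
  rw [hb, Nat.mod_mod_of_dvd _ ⟨y, by omega⟩, hx]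
  omega

lemma IsStrictlyConvexPolygon.ncard_image_even_inter_eq (hv : IsStrictlyConvexPolygon v)
    (hn : 3 ≤ n) {u : ℂ} (hpair : ∀ i, ∃ j ≠ i, ∃ t : ℝ, v j = v i + t * u) {L : Set ℂ}
    (hL : ∀ z ∈ L, ∀ t : ℝ, z + t * u ∈ L) :
    (v '' {i | i.val % 2 = 0} ∩ L).ncard = (v '' {i | i.val % 2 = 1} ∩ L).ncard := by
  obtain ⟨s, hs⟩ := hv.exists_edgesOrientedBy hn
  obtain ⟨π, hπ, hne, hline⟩ := hs.exists_involutive hpair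
  have heven : Even n := by
    simpa using Finset.even_card_of_involutive (s := Finset.univ) hπ hne (by simp)
  have hflip : ∀ k, (π k).val % 2 ≠ k.val % 2 := fun k =>
    Fin.val_mod_two_ne_of_odd_val_sub heven (hs.odd_val_sub hπ hne hline k)
  rw [← Set.image_inter_preimage, ← Set.image_inter_preimage,
    Set.ncard_image_of_injective _ (hv.injective hn),
    Set.ncard_image_of_injective _ (hv.injective hn)]
  refine Set.ncard_eq_of_involutive hπ ?_ ?_ <;>
  · rintro k ⟨hk, hkL⟩
    obtain ⟨t, ht⟩ := hline k
    refine ⟨?_, ?_⟩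
    · have := hflip k
      simp only [Set.mem_ofPred_eq] at hk ⊢
      omega
    · simpa only [Set.mem_preimage, ht] using hL _ hkL t

end Polygon

theorem uPolygon_xray_general (U : Finset ℂ) (hU : 2 ≤ U.card)
    (Λ : Set ℂ)
    -- Λ is uniformly discrete:
    (r : ℝ) (hr : 0 < r) (hdisc : ∀ x : ℂ, (Λ ∩ Metric.ball x r).Subsingleton)
    -- the vertices of the non-degenerate convex polygon P, in cyclic boundary order:
    (N : ℕ) (v : Fin (N + 3) → ℂ)
    (hvΛ : ∀ i, v i ∈ Λ)
    (hedge : ∀ i : Fin (N + 3), ∃ (f : ℂ →ₗ[ℝ] ℝ) (c : ℝ),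
      f (v i) = c ∧ f (v (i + 1)) = c ∧
      ∀ j : Fin (N + 3), j ≠ i → j ≠ i + 1 → f (v j) < c)
    -- P is a U-polygon:
    (hUpoly : ∀ i : Fin (N + 3), ∀ u ∈ U,
      ∃ j : Fin (N + 3), j ≠ i ∧ ∃ t : ℝ, v j = v i + (t : ℂ) * u) :
    -- the polygon and the alternating vertex classes:
    ∀ P V V' C F F' : Set ℂ,
      P = convexHull ℝ (Set.range v) →
      V = v '' {i : Fin (N + 3) | (i : ℕ) % 2 = 0} →
      V' = v '' {i : Fin (N + 3) | (i : ℕ) % 2 = 1} →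
      C = (Λ ∩ P) \ (V ∪ V') →
      F = C ∪ V →
      F' = C ∪ V' →
      V.ncard = V'.ncard ∧
      F ≠ F' ∧ F.Finite ∧ F'.Finite ∧ F ⊆ Λ ∧ F' ⊆ Λ ∧
      ∀ u ∈ U, ∀ x : ℂ,
        {z ∈ F | ∃ t : ℝ, z = x + (t : ℂ) * u}.ncard =
        {z ∈ F' | ∃ t : ℝ, z = x + (t : ℂ) * u}.ncard := by
  intro P V V' C F F' hP hV hV' hC hF hF'
  subst hF hF'
  have hv : IsStrictlyConvexPolygon v := hedge
  have hxray : ∀ u ∈ U, ∀ L : Set ℂ, (∀ z ∈ L, ∀ t : ℝ, z + t * u ∈ L) →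
      (V ∩ L).ncard = (V' ∩ L).ncard := fun u hu L hL => by
    rw [hV, hV']
    exact hv.ncard_image_even_inter_eq (by omega) (fun i => hUpoly i u hu) hL
  obtain ⟨u₀, hu₀⟩ : U.Nonempty := Finset.card_pos.mp (by omega)
  have hΛP : (Λ ∩ P).Finite := hP ▸ ((Set.finite_range v).isCompact_convexHull ℝ
    |>.finite_inter_of_subsingleton_inter_ball hr hdisc)
  have hrange : Set.range v ⊆ Λ ∩ P :=
    Set.subset_inter (Set.range_subset_iff.mpr hvΛ) (hP ▸ subset_convexHull ℝ _)
  have hVP : V ⊆ Λ ∩ P := hV ▸ (Set.image_subset_range _ _).trans hrange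
  have hV'P : V' ⊆ Λ ∩ P := hV' ▸ (Set.image_subset_range _ _).trans hrange
  have hCP : C ⊆ Λ ∩ P := hC ▸ Set.sdiff_subset
  have hCV : Disjoint C V := hC ▸ Set.disjoint_sdiff_left.mono_right Set.subset_union_left
  have hCV' : Disjoint C V' := hC ▸ Set.disjoint_sdiff_left.mono_right Set.subset_union_right
  have hv0 : v 0 ∈ V \ V' := by
    refine ⟨hV ▸ ⟨0, by simp, rfl⟩, hV' ▸ ?_⟩
    rintro ⟨i, hi, hi0⟩
    rw [hv.injective (by omega) hi0] at hi
    simp at hi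
  refine ⟨by simpa using hxray u₀ hu₀ Set.univ (by simp), Set.union_ne_union_of_mem_sdiff hCV hv0,
    (hΛP.subset hCP).union (hΛP.subset hVP), (hΛP.subset hCP).union (hΛP.subset hV'P),
    Set.union_subset (hCP.trans Set.inter_subset_left) (hVP.trans Set.inter_subset_left),
    Set.union_subset (hCP.trans Set.inter_subset_left) (hV'P.trans Set.inter_subset_left),
    fun u hu x => ?_⟩
  exact Set.ncard_union_inter_eq (hΛP.subset hCP) (hΛP.subset hVP) (hΛP.subset hV'P) hCV hCV'
    (hxray u hu _ fun z ⟨t, hz⟩ t' => ⟨t + t', by rw [hz]; push_cast; ring⟩)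

/-- Let `U ⊆ S¹` be a finite set of directions with at least two
elements, let `Λ ⊆ ℂ ≅ ℝ²` be a Delone set (uniformly discrete and relatively dense),
and let `P` be a `U`-polygon in `Λ`, given by its vertices `v 0, v 1, …` (at least
three of them) listed in order around the boundary (each consecutive pair spans an
edge, i.e. lies on a supporting line with all remaining vertices strictly on one side),
all lying in `Λ`, such that for every vertex and every `u ∈ U` the line through that
vertex in direction `u` passes through another vertex. Let `V` and `V'` be the two
alternating vertex classes around the boundary, `C = (Λ ∩ P) \ (V ∪ V')`, `F = C ∪ V`
and `F' = C ∪ V'`. Then `card V = card V'`, and `F`, `F'` are distinct finite subsets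
of `Λ` with the same X-rays in all directions of `U` (for every `u ∈ U`, every line in
direction `u` meets `F` and `F'` in the same number of points). -/
theorem uPolygon_xray (U : Finset ℂ) (hU : 2 ≤ U.card)
    (hUdir : ∀ u ∈ U, ‖u‖ = 1)
    (Λ : Set ℂ)
    -- Λ is uniformly discrete:
    (r : ℝ) (hr : 0 < r) (hdisc : ∀ x : ℂ, (Λ ∩ Metric.ball x r).Subsingleton)
    -- Λ is relatively dense:
    (R : ℝ) (hR : 0 < R) (hdense : ∀ x : ℂ, (Λ ∩ Metric.ball x R).Nonempty)
    -- the vertices of the non-degenerate convex polygon P, in cyclic boundary order: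
    (N : ℕ) (v : Fin (N + 3) → ℂ)
    (hvΛ : ∀ i, v i ∈ Λ)
    (hedge : ∀ i : Fin (N + 3), ∃ (f : ℂ →ₗ[ℝ] ℝ) (c : ℝ),
      f (v i) = c ∧ f (v (i + 1)) = c ∧
      ∀ j : Fin (N + 3), j ≠ i → j ≠ i + 1 → f (v j) < c)
    -- P is a U-polygon:
    (hUpoly : ∀ i : Fin (N + 3), ∀ u ∈ U,
      ∃ j : Fin (N + 3), j ≠ i ∧ ∃ t : ℝ, v j = v i + (t : ℂ) * u) :
    -- the polygon and the alternating vertex classes: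
    ∀ P V V' C F F' : Set ℂ,
      P = convexHull ℝ (Set.range v) →
      V = v '' {i : Fin (N + 3) | (i : ℕ) % 2 = 0} →
      V' = v '' {i : Fin (N + 3) | (i : ℕ) % 2 = 1} →
      C = (Λ ∩ P) \ (V ∪ V') →
      F = C ∪ V →
      F' = C ∪ V' →
      V.ncard = V'.ncard ∧
      F ≠ F' ∧ F.Finite ∧ F'.Finite ∧ F ⊆ Λ ∧ F' ⊆ Λ ∧
      ∀ u ∈ U, ∀ x : ℂ,
        {z ∈ F | ∃ t : ℝ, z = x + (t : ℂ) * u}.ncard =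
        {z ∈ F' | ∃ t : ℝ, z = x + (t : ℂ) * u}.ncard :=
  uPolygon_xray_general U hU Λ r hr hdisc N v hvΛ hedge hUpoly
end
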